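/- If A and B are positive semidefinite n×n complex matrices forming a monotone pair, and Z is a normal n×n matrix, then the Frobenius norm of AZB is at most the Frobenius norm of ZAB. -/

import Mathlib

/-!
Diagonalise `C = U Λ U*`. In the eigenbasis `A` and `B` become diagonal with entries
`a i = f (λ i) ≥ 0` and `b i = g (λ i) ≥ 0`, and `Y = U* Z U` is still normal, so
`‖AZB‖² = ∑ |Y i j|² a i² b j²` and `‖ZAB‖² = ∑ |Y i j|² a j² b j²`.
Normality of `Y` says that the weights `w i j = |Y i j|²` form a circulation (every row sum
equals the corresponding column sum), and for a circulation
`∑ w i j (P j - P i) Q j ≥ 0` whenever `P` and `Q` are similarly ordered: a constant `Q`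
contributes nothing, and for `Q` the indicator of an upper level set the sum is the gain of `P`
along the flow across a cut, which is nonnegative. Peeling off the level sets of `Q` one at a
time gives the general case.
-/

open Matrix ComplexOrder

/-- Apply a real function to a Hermitian matrix via the spectral decomposition. -/
noncomputable def hermFun {n : ℕ} {C : Matrix (Fin n) (Fin n) ℂ} (hC : C.IsHermitian)
    (f : ℝ → ℝ) : Matrix (Fin n) (Fin n) ℂ :=
  (hC.eigenvectorUnitary : Matrix (Fin n) (Fin n) ℂ) *
    Matrix.diagonal (fun i => (f (hC.eigenvalues i) : ℂ)) *
    (star (hC.eigenvectorUnitary : Matrix (Fin n) (Fin n) ℂ))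

/-- `(A, B)` is a monotone pair: `A = f(C)`, `B = g(C)` for a Hermitian `C` and
nondecreasing real functions `f`, `g`. -/
def MonotonePair {n : ℕ} (A B : Matrix (Fin n) (Fin n) ℂ) : Prop :=
  ∃ C : Matrix (Fin n) (Fin n) ℂ, ∃ hC : C.IsHermitian, ∃ f g : ℝ → ℝ,
    Monotone f ∧ Monotone g ∧ A = hermFun hC f ∧ B = hermFun hC g

/-- `(A, B)` is an antimonotone pair: `A = f(C)`, `B = g(C)` for a Hermitian `C`,
`f` nondecreasing and `g` nonincreasing. -/
def AntimonotonePair {n : ℕ} (A B : Matrix (Fin n) (Fin n) ℂ) : Prop :=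
  ∃ C : Matrix (Fin n) (Fin n) ℂ, ∃ hC : C.IsHermitian, ∃ f g : ℝ → ℝ,
    Monotone f ∧ Antitone g ∧ A = hermFun hC f ∧ B = hermFun hC g

/-- The Frobenius (Hilbert–Schmidt) norm `(Tr X*X)^(1/2)`. -/
noncomputable def frobNorm {n : ℕ} (X : Matrix (Fin n) (Fin n) ℂ) : ℝ :=
  Real.sqrt ((Matrix.trace (Xᴴ * X)).re)

open Finset

section Circulation

variable {ι : Type*} [Fintype ι] {w : ι → ι → ℝ}

theorem sum_sum_mul_right_eq_sum_sum_mul_left (hbal : ∀ j, ∑ i, w i j = ∑ i, w j i)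
    (R : ι → ℝ) : ∑ i, ∑ j, w i j * R j = ∑ i, ∑ j, w i j * R i := by
  rw [sum_comm]
  simp_rw [← sum_mul, hbal]

theorem sum_sum_mul_sub_mul_const_eq_zero (hbal : ∀ j, ∑ i, w i j = ∑ i, w j i)
    (P : ι → ℝ) (c : ℝ) : ∑ i, ∑ j, w i j * ((P j - P i) * c) = 0 := by
  calc _ = (∑ i, ∑ j, w i j * P j - ∑ i, ∑ j, w i j * P i) * c := by
        simp only [← sum_sub_distrib, sum_mul]
        exact sum_congr rfl fun i _ => sum_congr rfl fun j _ => by ring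
    _ = 0 := by rw [sum_sum_mul_right_eq_sum_sum_mul_left hbal, sub_self, zero_mul]

theorem sum_sum_mul_sub_nonneg_of_cut (hw : 0 ≤ w) (hbal : ∀ j, ∑ i, w i j = ∑ i, w j i)
    {P : ι → ℝ} (S : Finset ι) (hS : ∀ i ∉ S, ∀ j ∈ S, P i ≤ P j) :
    0 ≤ ∑ i, ∑ j ∈ S, w i j * (P j - P i) := by
  rcases S.eq_empty_or_nonempty with rfl | hne
  · simp
  -- Measuring `P` from a threshold `c` between its values off and on `S` changes no difference.
  set c := S.inf' hne P
  have hin : ∀ j ∈ S, 0 ≤ P j - c := fun j hj => sub_nonneg.2 (inf'_le P hj)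
  have hout : ∀ i ∉ S, P i - c ≤ 0 := fun i hi => sub_nonpos.2 (le_inf' hne P (hS i hi))
  calc (0 : ℝ) = ∑ j ∈ S, ∑ i ∈ S, (w j i * (P j - c) - w i j * (P i - c)) := by
        simp only [sum_sub_distrib]
        rw [sum_comm (s := S) (t := S) (f := fun j i => w i j * (P i - c)), sub_self]
    _ ≤ ∑ j ∈ S, ∑ i, (w j i * (P j - c) - w i j * (P i - c)) := by
        refine sum_le_sum fun j hj => sum_le_sum_of_subset_of_nonneg (subset_univ S) ?_
        intro i _ hi
        have := mul_nonneg (hw j i) (hin j hj)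
        have := mul_nonpos_of_nonneg_of_nonpos (hw i j) (hout i hi)
        linarith
    _ = ∑ i, ∑ j ∈ S, w i j * (P j - P i) := by
        rw [sum_comm (s := univ)]
        refine sum_congr rfl fun j _ => ?_
        rw [sum_sub_distrib, ← sum_mul, ← hbal, sum_mul, ← sum_sub_distrib]
        exact sum_congr rfl fun i _ => by ring

theorem sum_sum_mul_sub_mul_add_ite [DecidableEq ι] (P Q : ι → ℝ) (S : Finset ι) (c : ℝ) :
    ∑ i, ∑ j, w i j * ((P j - P i) * (Q j + if j ∈ S then c else 0)) =
      ∑ i, ∑ j, w i j * ((P j - P i) * Q j) + c * ∑ i, ∑ j ∈ S, w i j * (P j - P i) := by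
  rw [mul_sum, ← sum_add_distrib]
  refine sum_congr rfl fun i _ => ?_
  simp only [mul_add, sum_add_distrib, mul_ite, mul_zero]
  rw [sum_ite_mem, univ_inter, mul_sum]
  exact congrArg _ (sum_congr rfl fun j _ => by ring)

theorem sum_sum_mul_sub_mul_nonneg_of_monovary (hw : 0 ≤ w)
    (hbal : ∀ j, ∑ i, w i j = ∑ i, w j i) {P Q : ι → ℝ} (hPQ : Monovary P Q) :
    0 ≤ ∑ i, ∑ j, w i j * ((P j - P i) * Q j) := by
  classical
  suffices key : ∀ T : Finset ℝ, ∀ Q : ι → ℝ, (∀ j, Q j ∈ T) → Monovary P Q →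
      0 ≤ ∑ i, ∑ j, w i j * ((P j - P i) * Q j) from
    key _ Q (fun j => mem_image_of_mem Q (mem_univ j)) hPQ
  intro T
  induction T using Finset.induction_on_max with
  | empty =>
    intro Q hQ _
    have : IsEmpty ι := ⟨fun j => by simpa using hQ j⟩
    simp
  | insert a T hlt ih =>
    intro Q hmem hPQ
    rcases T.eq_empty_or_nonempty with rfl | hne
    · obtain rfl : Q = fun _ => a := funext fun j => by simpa using hmem j
      rw [sum_sum_mul_sub_mul_const_eq_zero hbal]
    set b := T.max' hne
    have hba : b < a := hlt b (T.max'_mem hne)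
    set Q' := fun j => min (Q j) b
    set S := univ.filter fun j => Q j = a
    have hlow : ∀ j, Q j ≠ a → Q j ≤ b := fun j hj =>
      T.le_max' _ ((mem_insert.1 (hmem j)).resolve_left hj)
    have hQ' : ∀ j, Q' j ∈ T := by
      intro j
      by_cases hj : Q j = a
      · simpa [Q', hj, hba.le] using T.max'_mem hne
      · simpa [Q', hlow j hj] using (mem_insert.1 (hmem j)).resolve_left hj
    have hPQ' : Monovary P Q' := fun i j hij =>
      hPQ (lt_of_not_ge fun h => (min_le_min_right b h).not_gt hij)
    have hcut := sum_sum_mul_sub_nonneg_of_cut hw hbal S fun i hi j hj => by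
      simp only [S, mem_filter, mem_univ, true_and] at hi hj
      exact hPQ (hj ▸ (hlow i hi).trans_lt hba)
    have hQ : Q = fun j => Q' j + if j ∈ S then a - b else 0 := funext fun j => by
      by_cases hj : Q j = a
      · simp [Q', S, hj, hba.le]
      · simp [Q', S, hj, hlow j hj]
    rw [hQ, sum_sum_mul_sub_mul_add_ite]
    exact add_nonneg (ih Q' hQ' hPQ') (mul_nonneg (sub_nonneg.2 hba.le) hcut)

end Circulation

theorem re_trace_conjTranspose_mul_self {m n : Type*} [Fintype m] [Fintype n]
    (X : Matrix m n ℂ) : (Xᴴ * X).trace.re = ∑ i, ∑ j, Complex.normSq (X i j) := by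
  simp only [trace, Matrix.diag, mul_apply, conjTranspose_apply, Complex.re_sum, RCLike.star_def,
    ← Complex.normSq_eq_conj_mul_self, Complex.ofReal_re]
  exact sum_comm

theorem frobNorm_eq_sqrt_sum_normSq {n : ℕ} (X : Matrix (Fin n) (Fin n) ℂ) :
    frobNorm X = √(∑ i, ∑ j, Complex.normSq (X i j)) := by
  rw [frobNorm, re_trace_conjTranspose_mul_self]

theorem frobNorm_conjStarAlgAut {n : ℕ} (U : unitaryGroup (Fin n) ℂ)
    (M : Matrix (Fin n) (Fin n) ℂ) :
    frobNorm (Unitary.conjStarAlgAut ℂ _ U M) = frobNorm M := by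
  have hU : star (U : Matrix (Fin n) (Fin n) ℂ) * U = 1 := Unitary.coe_star_mul_self U
  rw [frobNorm, frobNorm, ← star_eq_conjTranspose, ← map_star, ← map_mul,
    Unitary.conjStarAlgAut_apply, trace_mul_cycle, hU, one_mul, star_eq_conjTranspose]

theorem sum_normSq_apply_eq_sum_normSq_apply_of_isStarNormal {m : Type*} [Fintype m]
    (X : Matrix m m ℂ) [IsStarNormal X] (j : m) :
    ∑ i, Complex.normSq (X i j) = ∑ i, Complex.normSq (X j i) := by
  have h := congrArg (fun M : Matrix m m ℂ => (M j j).re) (star_comm_self' X)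
  simpa [mul_apply, Complex.normSq_apply, mul_comm] using h

theorem hermFun_eq_conjStarAlgAut {n : ℕ} {C : Matrix (Fin n) (Fin n) ℂ}
    (hC : C.IsHermitian)
    (f : ℝ → ℝ) :
    hermFun hC f = Unitary.conjStarAlgAut ℂ _ hC.eigenvectorUnitary
      (diagonal fun i => (f (hC.eigenvalues i) : ℂ)) :=
  rfl

theorem hermFun_nonneg_of_posSemidef {n : ℕ} {C : Matrix (Fin n) (Fin n) ℂ}
    (hC : C.IsHermitian) {f : ℝ → ℝ} (hf : (hermFun hC f).PosSemidef) (i : Fin n) :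
    0 ≤ f (hC.eigenvalues i) := by
  have h := Unitary.isUnit_coe.posSemidef_star_right_conjugate_iff.1 hf
  rw [posSemidef_diagonal_iff] at h
  exact_mod_cast h i

theorem frobNorm_diagonal_mul_mul_diagonal_le {n : ℕ} (Y : Matrix (Fin n) (Fin n) ℂ)
    [IsStarNormal Y] {p q : Fin n → ℝ} (hp : 0 ≤ p) (hq : 0 ≤ q) (hpq : Monovary p q) :
    frobNorm (diagonal (fun i => (p i : ℂ)) * Y * diagonal fun i => (q i : ℂ)) ≤
      frobNorm (Y * diagonal (fun i => (p i : ℂ)) * diagonal fun i => (q i : ℂ)) := by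
  rw [frobNorm_eq_sqrt_sum_normSq, frobNorm_eq_sqrt_sum_normSq]
  refine Real.sqrt_le_sqrt (sub_nonneg.1 ?_)
  convert sum_sum_mul_sub_mul_nonneg_of_monovary (w := fun i j => Complex.normSq (Y i j))
    (fun i j => Complex.normSq_nonneg _) (sum_normSq_apply_eq_sum_normSq_apply_of_isStarNormal Y)
    ((hpq.pow_left₀ hp 2).pow_right₀ hq 2) using 1
  simp only [← sum_sub_distrib, mul_diagonal, diagonal_mul, Complex.normSq_mul,
    Complex.normSq_ofReal, Pi.pow_apply]
  exact sum_congr rfl fun i _ => sum_congr rfl fun j _ => by ring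

theorem frobenius_chebyshev_monotone {n : ℕ} (A B Z : Matrix (Fin n) (Fin n) ℂ)
    (hA : A.PosSemidef) (hB : B.PosSemidef) (hZ : Zᴴ * Z = Z * Zᴴ)
    (hmono : MonotonePair A B) :
    frobNorm (A * Z * B) ≤ frobNorm (Z * A * B) := by
  obtain ⟨C, hC, f, g, hf, hg, rfl, rfl⟩ := hmono
  set φ := Unitary.conjStarAlgAut ℂ _ hC.eigenvectorUnitary
  have : IsStarNormal Z := ⟨hZ⟩
  rw [← φ.apply_symm_apply Z, hermFun_eq_conjStarAlgAut, hermFun_eq_conjStarAlgAut, ← map_mul,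
    ← map_mul, ← map_mul, ← map_mul, frobNorm_conjStarAlgAut, frobNorm_conjStarAlgAut]
  exact frobNorm_diagonal_mul_mul_diagonal_le (φ.symm Z) (hermFun_nonneg_of_posSemidef hC hA)
    (hermFun_nonneg_of_posSemidef hC hB) ((hf.monovary hg).comp_right hC.eigenvalues)
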